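/- Let n, q ∈ ℕ, σ_e > 0, σ_s ≥ 0, δ ≥ 0 with σ_s ≥ δ. For every e ∈ ℝⁿ, θ̃ ∈ ℝ^q, P ∈ ℝ^{n×q}, d ∈ ℝⁿ with ‖d‖₂ ≤ δ, and s ∈ K[sgn](e), the following inequality holds: eᵀ(Pθ̃ + d − σ_e e − σ_s s) − θ̃ᵀPᵀe ≤ −σ_e‖e‖₂². -/

import Mathlib

open scoped InnerProductSpace Matrix

/-- The Filippov set-valued sign map `K[sgn]`: `s ∈ K[sgn](e)` iff `sᵢ = sign(eᵢ)` whenever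
`eᵢ ≠ 0` and `sᵢ ∈ [−1,1]` whenever `eᵢ = 0`. -/
def filippovSgn {n : ℕ} (e : EuclideanSpace ℝ (Fin n)) : Set (EuclideanSpace ℝ (Fin n)) :=
  {s | ∀ i, (e i ≠ 0 → s i = Real.sign (e i)) ∧ (e i = 0 → s i ∈ Set.Icc (-1 : ℝ) 1)}

/-! The adaptation term `θ̃ᵀPᵀe` cancels the cross term `eᵀPθ̃` exactly, since `Pᵀ` is the
adjoint of `P`. What remains is `eᵀd − σ_s eᵀs − σ_e‖e‖²`, and for `s ∈ K[sgn](e)` we have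
`eᵀs = ‖e‖₁ ≥ ‖e‖₂`, so Cauchy–Schwarz gives `eᵀd ≤ ‖e‖₂‖d‖₂ ≤ ‖e‖₁ σ_s = σ_s eᵀs`. -/

lemma Real.self_mul_sign (r : ℝ) : r * Real.sign r = |r| := by
  obtain hneg | rfl | hpos := lt_trichotomy r 0
  · rw [Real.sign_of_neg hneg, abs_of_neg hneg, mul_neg_one]
  · simp
  · rw [Real.sign_of_pos hpos, abs_of_pos hpos, mul_one]

lemma EuclideanSpace.norm_le_sum_norm {𝕜 ι : Type*} [RCLike 𝕜] [Fintype ι]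
    (x : EuclideanSpace 𝕜 ι) : ‖x‖ ≤ ∑ i, ‖x i‖ := by
  have hsum : 0 ≤ ∑ i, ‖x i‖ := Finset.sum_nonneg fun i _ => norm_nonneg (x i)
  rw [EuclideanSpace.norm_eq, Real.sqrt_le_left hsum]
  exact Finset.sum_sq_le_sq_sum_of_nonneg fun i _ => norm_nonneg (x i)

lemma Matrix.inner_toEuclideanLin_transpose {m n : Type*} [Fintype m] [Fintype n]
    [DecidableEq m] [DecidableEq n] (A : Matrix m n ℝ) (x : EuclideanSpace ℝ n)
    (y : EuclideanSpace ℝ m) :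
    ⟪x, Matrix.toEuclideanLin Aᵀ y⟫_ℝ = ⟪Matrix.toEuclideanLin A x, y⟫_ℝ := by
  rw [← Matrix.conjTranspose_eq_transpose_of_trivial,
    Matrix.toEuclideanLin_conjTranspose_eq_adjoint, LinearMap.adjoint_inner_right]

lemma inner_eq_sum_abs_of_mem_filippovSgn {n : ℕ} {e s : EuclideanSpace ℝ (Fin n)}
    (hs : s ∈ filippovSgn e) : ⟪e, s⟫_ℝ = ∑ i, |e i| := by
  rw [PiLp.inner_apply]
  refine Finset.sum_congr rfl fun i _ => ?_
  rcases eq_or_ne (e i) 0 with hzero | hne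
  · simp [hzero]
  · rw [(hs i).1 hne, real_inner_eq_re_inner, RCLike.inner_apply]
    simp [mul_comm, Real.self_mul_sign]

lemma inner_le_mul_inner_of_mem_filippovSgn {n : ℕ} {e d s : EuclideanSpace ℝ (Fin n)} {c : ℝ}
    (hd : ‖d‖ ≤ c) (hs : s ∈ filippovSgn e) : ⟪e, d⟫_ℝ ≤ c * ⟪e, s⟫_ℝ :=
  calc ⟪e, d⟫_ℝ ≤ ‖e‖ * ‖d‖ := real_inner_le_norm e d
    _ ≤ (∑ i, |e i|) * c :=
      mul_le_mul (EuclideanSpace.norm_le_sum_norm e) hd (norm_nonneg d)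
        (Finset.sum_nonneg fun i _ => abs_nonneg (e i))
    _ = c * ⟪e, s⟫_ℝ := by rw [inner_eq_sum_abs_of_mem_filippovSgn hs, mul_comm]

theorem lyapunov_derivative_pointwise_bound_general
    (n q : ℕ) (σe σs δ : ℝ) (hgain : δ ≤ σs)
    (e : EuclideanSpace ℝ (Fin n)) (θt : EuclideanSpace ℝ (Fin q))
    (P : Matrix (Fin n) (Fin q) ℝ) (d s : EuclideanSpace ℝ (Fin n))
    (hd : ‖d‖ ≤ δ) (hs : s ∈ filippovSgn e) :
    ⟪e, Matrix.toEuclideanLin P θt + d - σe • e - σs • s⟫_ℝ -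
      ⟪θt, Matrix.toEuclideanLin Pᵀ e⟫_ℝ ≤ -σe * ‖e‖ ^ 2 := by
  have hdist : ⟪e, d⟫_ℝ ≤ σs * ⟪e, s⟫_ℝ :=
    inner_le_mul_inner_of_mem_filippovSgn (hd.trans hgain) hs
  rw [Matrix.inner_toEuclideanLin_transpose, real_inner_comm e, inner_sub_right, inner_sub_right,
    inner_add_right, inner_smul_right, inner_smul_right, real_inner_self_eq_norm_sq]
  linarith

/-- **The central pointwise Lyapunov-derivative estimate.**
For `σ_e > 0`, `σ_s ≥ 0`, `δ ≥ 0` with `σ_s ≥ δ`, all `e`, `θ̃`, `P`, `d` with `‖d‖₂ ≤ δ`,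
and `s ∈ K[sgn](e)`:
`eᵀ(Pθ̃ + d − σ_e e − σ_s s) − θ̃ᵀPᵀe ≤ −σ_e‖e‖₂²`. -/
theorem lyapunov_derivative_pointwise_bound
    (n q : ℕ) (σe σs δ : ℝ) (hσe : 0 < σe) (hσs : 0 ≤ σs) (hδ : 0 ≤ δ) (hgain : δ ≤ σs)
    (e : EuclideanSpace ℝ (Fin n)) (θt : EuclideanSpace ℝ (Fin q))
    (P : Matrix (Fin n) (Fin q) ℝ) (d s : EuclideanSpace ℝ (Fin n))
    (hd : ‖d‖ ≤ δ) (hs : s ∈ filippovSgn e) :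
    ⟪e, Matrix.toEuclideanLin P θt + d - σe • e - σs • s⟫_ℝ -
      ⟪θt, Matrix.toEuclideanLin Pᵀ e⟫_ℝ ≤ -σe * ‖e‖ ^ 2 :=
  lyapunov_derivative_pointwise_bound_general n q σe σs δ hgain e θt P d s hd hs
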